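/- arXiv:1804.03509 — 4 statements merged into one kernel-verified Lean document; each statement's English description precedes it below -/
import Mathlib

section
/- Let n₁, …, n_J be nonnegative integers with n = n₁ + ⋯ + n_J ≥ 1. Then ∏_{j=1}^J (n_j/n)^{n_j} / ∏_{j=1}^J Γ(n_j + 1/2) ≤ 1 / ( Γ(n + 1/2) · Γ(1/2)^{J−1} ), with the convention 0^0 = 1. -/
open MeasureTheory Filter
open scoped Classical

namespace SBM

/-! ### Counters -/

/-- `nCount z a` = number of nodes with label `a`. -/
def nCount {k n : ℕ} (z : Fin n → Fin k) (a : Fin k) : ℕ :=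
  (Finset.univ.filter fun i => z i = a).card

/-- `nPair z a b` = `n_{a,b}(z)`. -/
def nPair {k n : ℕ} (z : Fin n → Fin k) (a b : Fin k) : ℕ :=
  if a = b then nCount z a * (nCount z a - 1) else nCount z a * nCount z b

/-- `oCount z x a b` = `O_{a,b}(z,x)`. -/
def oCount {k n : ℕ} (z : Fin n → Fin k) (x : Fin n → Fin n → Bool) (a b : Fin k) : ℕ :=
  ∑ i : Fin n, ∑ j : Fin n, if z i = a ∧ z j = b ∧ x i j = true then 1 else 0

/-! ### Likelihoods -/

/-- Joint SBM likelihood `P_{π,P}(z,x)`; real exponents are taken via `Real.rpow`,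
which satisfies the convention `0 ^ 0 = 1`. -/
noncomputable def likZX {k n : ℕ} (π : Fin k → ℝ) (P : Fin k → Fin k → ℝ)
    (z : Fin n → Fin k) (x : Fin n → Fin n → Bool) : ℝ :=
  (∏ a, π a ^ nCount z a) *
    ∏ a, ∏ b, P a b ^ ((oCount z x a b : ℝ) / 2) *
      (1 - P a b) ^ (((nPair z a b : ℝ) - (oCount z x a b : ℝ)) / 2)

/-- Marginal SBM likelihood `P_{π,P}(x) = Σ_z P_{π,P}(z,x)`. -/
noncomputable def margLik {k n : ℕ} (π : Fin k → ℝ) (P : Fin k → Fin k → ℝ)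
    (x : Fin n → Fin n → Bool) : ℝ :=
  ∑ z : Fin n → Fin k, likZX π P z x

/-- The parameter space `Θ^k`. -/
def memTheta {k : ℕ} (π : Fin k → ℝ) (P : Fin k → Fin k → ℝ) : Prop :=
  (∀ a, 0 < π a ∧ π a ≤ 1) ∧ (∑ a, π a) = 1 ∧
    (∀ a b, 0 ≤ P a b ∧ P a b ≤ 1) ∧ ∀ a b, P a b = P b a

/-- `sup_{(π,P) ∈ Θ^k} P_{π,P}(x)`. -/
noncomputable def supLik (k n : ℕ) (x : Fin n → Fin n → Bool) : ℝ :=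
  sSup {v : ℝ | ∃ (π : Fin k → ℝ) (P : Fin k → Fin k → ℝ), memTheta π P ∧ v = margLik π P x}

/-- `sup_{(π,P) ∈ Θ^k} P_{π,P}(z,x)`. -/
noncomputable def supLikZ (k n : ℕ) (z : Fin n → Fin k) (x : Fin n → Fin n → Bool) : ℝ :=
  sSup {v : ℝ | ∃ (π : Fin k → ℝ) (P : Fin k → Fin k → ℝ), memTheta π P ∧ v = likZX π P z x}

/-! ### The KT mixture -/

/-- Index set of upper-triangular pairs, parametrizing a symmetric matrix. -/
abbrev UT (k : ℕ) := {p : Fin k × Fin k // p.1 ≤ p.2}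

/-- Parametrize the simplex by its first `k-1` coordinates. -/
noncomputable def mkPi {k : ℕ} (u : Fin (k - 1) → ℝ) : Fin k → ℝ := fun i =>
  if h : (i : ℕ) < k - 1 then u ⟨i, h⟩ else 1 - ∑ j, u j

/-- Build a symmetric matrix from its upper-triangular entries. -/
def mkP {k : ℕ} (q : UT k → ℝ) : Fin k → Fin k → ℝ := fun a b =>
  if h : a ≤ b then q ⟨(a, b), h⟩ else q ⟨(b, a), (le_total a b).resolve_left h⟩

/-- Dirichlet(1/2,…,1/2) density. -/
noncomputable def dirDensity (k : ℕ) (π : Fin k → ℝ) : ℝ :=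
  (Real.Gamma ((k : ℝ) / 2) / Real.Gamma (1 / 2) ^ k) * ∏ a, π a ^ (-(1 : ℝ) / 2)

/-- Product of Beta(1/2,1/2) densities over the upper-triangular entries. -/
noncomputable def betaDensity (k : ℕ) (q : UT k → ℝ) : ℝ :=
  ∏ p : UT k, (1 / Real.Gamma (1 / 2) ^ 2) * q p ^ (-(1 : ℝ) / 2) * (1 - q p) ^ (-(1 : ℝ) / 2)

/-- The region of valid parameters in the `(u, q)` parametrization. -/
def validRegion (k : ℕ) : Set ((Fin (k - 1) → ℝ) × (UT k → ℝ)) :=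
  {θ | (∀ a, 0 < mkPi θ.1 a) ∧ ∀ p, 0 ≤ θ.2 p ∧ θ.2 p ≤ 1}

/-- The KT mixture distribution `KT_{n,k}(x)`. -/
noncomputable def KTmix (k n : ℕ) (x : Fin n → Fin n → Bool) : ℝ :=
  ∫ θ in validRegion k,
    margLik (mkPi θ.1) (mkP θ.2) x * dirDensity k (mkPi θ.1) * betaDensity k θ.2

/-! ### The KT order estimator -/

/-- The penalty `pen(k,n) = Σ_{i=1}^{k-1} ((i(i+2)+3+ε)/2)·log n`. -/
noncomputable def pen (ε : ℝ) (k n : ℕ) : ℝ :=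
  ∑ i ∈ Finset.Icc 1 (k - 1), (((i : ℝ) * ((i : ℝ) + 2) + 3 + ε) / 2) * Real.log n

/-- The penalized KT score `log KT_{n,k}(x) − pen(k,n)`. -/
noncomputable def score (ε : ℝ) (n : ℕ) (x : Fin n → Fin n → Bool) (k : ℕ) : ℝ :=
  Real.log (KTmix k n x) - pen ε k n

/-- `m ≥ 1` maximizes the penalized KT score among `k ≥ 1`. -/
def IsMaximizer (ε : ℝ) (n : ℕ) (x : Fin n → Fin n → Bool) (m : ℕ) : Prop :=
  1 ≤ m ∧ ∀ k, 1 ≤ k → score ε n x k ≤ score ε n x m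

/-- `m` is the value `k̂_KT(x)` of the KT order estimator:
the (least) maximizer of the penalized KT score. -/
def IsKTEstimate (ε : ℝ) (n : ℕ) (x : Fin n → Fin n → Bool) (m : ℕ) : Prop :=
  IsMaximizer ε n x m ∧ ∀ m', IsMaximizer ε n x m' → m ≤ m'

/-! ### Probability of a set of adjacency matrices (finite-`n` model) -/

/-- `P_{π,P}(S)`: the probability, under the SBM with parameters `(π,P)`, of the event
`S` (a set of symmetric, zero-diagonal 0-1 adjacency matrices). -/
noncomputable def probOf {k : ℕ} (n : ℕ) (π : Fin k → ℝ) (P : Fin k → Fin k → ℝ)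
    (S : Set (Fin n → Fin n → Bool)) : ℝ :=
  ∑ x : Fin n → Fin n → Bool,
    if (∀ i j, x i j = x j i) ∧ (∀ i, x i i = false) ∧ x ∈ S then margLik π P x else 0

/-! ### Coupled sample space -/

/-- The adjacency matrix of size `n`, built from the labels `Z` and the uniform
variables `U` via `X_{ij} = 1{U_{ij} ≤ P^{(n)}_{Z_i,Z_j}}` (with `U` indexed by
the unordered pair, so that `X` is symmetric, and zero diagonal). -/
noncomputable def sbmX {Ω : Type*} {k0 : ℕ} (P : ℕ → Fin k0 → Fin k0 → ℝ)
    (Z : ℕ → Ω → Fin k0) (U : ℕ → ℕ → Ω → ℝ) (n : ℕ) (ω : Ω) :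
    Fin n → Fin n → Bool := fun i j =>
  if i = j then false
  else if U (min (i : ℕ) (j : ℕ)) (max (i : ℕ) (j : ℕ)) ω ≤ P n (Z (i : ℕ) ω) (Z (j : ℕ) ω)
    then true else false

/-- The combined family of all labels and all uniform variables,
used to state their joint independence. -/
def coupling {Ω : Type*} {k0 : ℕ} (Z : ℕ → Ω → Fin k0) (U : ℕ → ℕ → Ω → ℝ) :
    (i : ℕ ⊕ (ℕ × ℕ)) → Ω → Sum.elim (fun _ : ℕ => Fin k0) (fun _ : ℕ × ℕ => ℝ) i
  | Sum.inl a => Z a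
  | Sum.inr p => U p.1 p.2

/-- Measurable-space structure on the codomains of `coupling`. -/
def couplingMS (k0 : ℕ) :
    ∀ i : ℕ ⊕ (ℕ × ℕ), MeasurableSpace (Sum.elim (fun _ : ℕ => Fin k0) (fun _ : ℕ × ℕ => ℝ) i)
  | Sum.inl _ => (inferInstance : MeasurableSpace (Fin k0))
  | Sum.inr _ => (inferInstance : MeasurableSpace ℝ)

/-! ### Merging -/

/-- `γ(t) = t log t + (1−t) log(1−t)` (with `0 log 0 = 0`, automatic since `Real.log 0 = 0`). -/
noncomputable def gammaFn (t : ℝ) : ℝ := t * Real.log t + (1 - t) * Real.log (1 - t)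

/-- `τ(t) = t log t − t`. -/
noncomputable def tauFn (t : ℝ) : ℝ := t * Real.log t - t

/-- Merged community proportions along a collapsing map `g`. -/
noncomputable def mergePi {k : ℕ} (g : Fin k → Fin (k - 1)) (π : Fin k → ℝ) :
    Fin (k - 1) → ℝ :=
  fun c => ∑ a ∈ Finset.univ.filter fun a => g a = c, π a

/-- Merged connectivity matrix along a collapsing map `g`: the `π`-weighted average of `P`
over the fibers of `g`.  When `g` merges exactly the blocks `r` and `s` this coincides with
the merging operation `M_{r,s}(π,P)` of the paper. -/
noncomputable def mergeP {k : ℕ} (g : Fin k → Fin (k - 1)) (π : Fin k → ℝ)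
    (P : Fin k → Fin k → ℝ) : Fin (k - 1) → Fin (k - 1) → ℝ := fun c d =>
  (∑ a ∈ Finset.univ.filter fun a => g a = c, ∑ b ∈ Finset.univ.filter fun b => g b = d,
      π a * π b * P a b) /
  (∑ a ∈ Finset.univ.filter fun a => g a = c, ∑ b ∈ Finset.univ.filter fun b => g b = d,
      π a * π b)

/-- The constant `c_{k,n}` of Proposition 1. -/
noncomputable def cConst (k n : ℕ) : ℝ :=
  (k : ℝ) * ((k : ℝ) + 1) / 2 * Real.log (Real.Gamma (1 / 2)) +
    (k : ℝ) * ((k : ℝ) - 1) / (4 * n) + 1 / (12 * n) +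
    Real.log (Real.Gamma (1 / 2) / Real.Gamma ((k : ℝ) / 2)) + 7 * ((k : ℝ) * ((k : ℝ) + 1)) / 12

/-- Embedding `Fin (k-1) → Fin k`. -/
def up {k : ℕ} (c : Fin (k - 1)) : Fin k := ⟨c.1, by have h := c.2; omega⟩


section GammaIneqAux
open Real

-- g(t) = (1+t)e^{-t} - (1-t)e^t is monotone
lemma aux_exp (t : ℝ) (ht : 0 ≤ t) : (1 - t) * Real.exp t ≤ (1 + t) * Real.exp (-t) := by
  have hmono : Monotone (fun t : ℝ => (1 + t) * Real.exp (-t) - (1 - t) * Real.exp t) := by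
    apply monotone_of_hasDerivAt_nonneg (f' := fun t => t * (Real.exp t - Real.exp (-t)))
    · intro x
      have h1 : HasDerivAt (fun t : ℝ => (1 + t) * Real.exp (-t)) (Real.exp (-x) + (1 + x) * (-Real.exp (-x))) x := by
        have he : HasDerivAt (fun t : ℝ => Real.exp (-t)) (-Real.exp (-x)) x := by
          simpa [Function.comp_def] using ((Real.hasDerivAt_exp (-x)).comp x ((hasDerivAt_id x).neg))
        simpa using ((hasDerivAt_id x).const_add 1).fun_mul he
      have h2 : HasDerivAt (fun t : ℝ => (1 - t) * Real.exp t) (-Real.exp x + (1 - x) * Real.exp x) x := by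
        have hl : HasDerivAt (fun t : ℝ => 1 - t) (-1) x := by
          simpa using (hasDerivAt_const x (1:ℝ)).fun_sub (hasDerivAt_id' x)
        simpa using hl.fun_mul (Real.hasDerivAt_exp x)
      have := h1.fun_sub h2
      refine this.congr_deriv ?_
      ring
    · intro x
      show 0 ≤ x * (Real.exp x - Real.exp (-x))
      rcases le_or_gt 0 x with hx | hx
      · have : Real.exp (-x) ≤ Real.exp x := Real.exp_le_exp.2 (by linarith)
        have := sub_nonneg.2 this
        positivity
      · have h1 : Real.exp x ≤ Real.exp (-x) := Real.exp_le_exp.2 (by linarith)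
        have := mul_nonneg (by linarith : (0:ℝ) ≤ -x) (by linarith : (0:ℝ) ≤ Real.exp (-x) - Real.exp x)
        nlinarith [this]
  have := hmono ht
  simp only [add_zero, neg_zero, Real.exp_zero, mul_one, sub_zero, one_mul] at this
  linarith

-- log(x+1) - log x ≥ 1/(x+1/2) for x > 0
lemma exp_div_le (t : ℝ) (ht0 : 0 < t) (ht1 : t < 1) :
    Real.exp (2*t) ≤ (1 + t) / (1 - t) := by
  have h := aux_exp t ht0.le
  have hx1 : (0:ℝ) < 1 - t := by linarith
  rw [le_div_iff₀ hx1]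
  have he : Real.exp (2*t) * (1 - t) = (1-t) * Real.exp t * Real.exp t := by
    rw [mul_comm, mul_assoc, ← Real.exp_add]; ring_nf
  rw [he]
  calc (1-t) * Real.exp t * Real.exp t ≤ (1+t) * Real.exp (-t) * Real.exp t := by
        apply mul_le_mul_of_nonneg_right h (Real.exp_nonneg t)
    _ = 1 + t := by rw [mul_assoc, ← Real.exp_add]; simp

lemma aux_log (x : ℝ) (hx : 0 < x) : 1 / (x + 1/2) ≤ Real.log (x + 1) - Real.log x := by
  have h2x : (0:ℝ) < 2*x + 1 := by linarith
  have ht0 : 0 < 1/(2*x+1) := by positivity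
  have ht1 : 1/(2*x+1) < 1 := by rw [div_lt_one h2x]; linarith
  have hexp := exp_div_le (1/(2*x+1)) ht0 ht1
  have hratio : (1 + 1/(2*x+1)) / (1 - 1/(2*x+1)) = (x+1)/x := by
    have hne : 1 - 1/(2*x+1) ≠ 0 := by
      have : 1/(2*x+1) < 1 := ht1
      linarith
    rw [div_eq_div_iff hne hx.ne']
    field_simp
    ring
  rw [hratio] at hexp
  have hlog := Real.log_le_log (Real.exp_pos _) hexp
  rw [Real.log_exp, Real.log_div (by linarith) hx.ne'] at hlog
  have h2t : 2 * (1/(2*x+1)) = 1 / (x + 1/2) := by field_simp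
  linarith [h2t ▸ hlog]

noncomputable def Ffun (x : ℝ) : ℝ := (x+1) * Real.log (x+1) - x * Real.log x - Real.log (x + 1/2)

lemma Ffun_mono : MonotoneOn Ffun (Set.Ici (1:ℝ)) := by
  have key : ∀ x : ℝ, 1/2 < x → HasDerivAt Ffun (Real.log (x+1) - Real.log x - 1/(x+1/2)) x := by
    intro x hx
    have hx0 : x ≠ 0 := by intro h; rw [h] at hx; norm_num at hx
    have hx1 : x + 1 ≠ 0 := by intro h; nlinarith
    have hxh : x + 1/2 ≠ 0 := by intro h; nlinarith
    have h1 : HasDerivAt (fun y : ℝ => (y+1) * Real.log (y+1)) (Real.log (x+1) + 1) x := by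
      have := (Real.hasDerivAt_mul_log hx1).comp x ((hasDerivAt_id x).add_const 1)
      simpa [Function.comp_def] using this
    have h2 : HasDerivAt (fun y : ℝ => y * Real.log y) (Real.log x + 1) x :=
      Real.hasDerivAt_mul_log hx0
    have h3 : HasDerivAt (fun y : ℝ => Real.log (y + 1/2)) (1/(x+1/2)) x := by
      have := (Real.hasDerivAt_log hxh).comp x ((hasDerivAt_id x).add_const (1/2))
      simpa [one_div, Function.comp_def] using this
    have := (h1.fun_sub h2).fun_sub h3
    refine this.congr_deriv ?_
    ring
  apply monotoneOn_of_hasDerivWithinAt_nonneg (f' := fun x => Real.log (x+1) - Real.log x - 1/(x+1/2)) (convex_Ici 1)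
  · intro x hx
    exact (key x (by simp at hx; linarith)).continuousAt.continuousWithinAt
  · intro x hx
    simp only [interior_Ici, Set.mem_Ioi] at hx
    exact (key x (by linarith)).hasDerivWithinAt
  · intro x hx
    simp only [interior_Ici, Set.mem_Ioi] at hx
    have := aux_log x (by linarith)
    linarith

lemma pow_self_pos (a : ℕ) : 0 < (a:ℝ)^a := by
  rcases Nat.eq_zero_or_pos a with h | h
  · simp [h]
  · have : (0:ℝ) < a := by exact_mod_cast h
    positivity

lemma exp_Ffun (m : ℕ) (hm : 1 ≤ m) :
    Real.exp (Ffun (m:ℝ)) = ((m:ℝ)+1)^(m+1) / ((m:ℝ)^m * ((m:ℝ)+1/2)) := by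
  have hm0 : (0:ℝ) < m := by exact_mod_cast hm
  unfold Ffun
  rw [Real.exp_sub, Real.exp_sub]
  have e1 : Real.exp (((m:ℝ)+1) * Real.log ((m:ℝ)+1)) = ((m:ℝ)+1)^(m+1) := by
    rw [mul_comm, ← Real.rpow_def_of_pos (by positivity)]
    rw [show ((m:ℝ)+1) = ((m+1:ℕ):ℝ) by push_cast; ring]
    rw [Real.rpow_natCast]
  have e2 : Real.exp ((m:ℝ) * Real.log (m:ℝ)) = (m:ℝ)^m := by
    rw [mul_comm, ← Real.rpow_def_of_pos hm0, Real.rpow_natCast]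
  have e3 : Real.exp (Real.log ((m:ℝ) + 1/2)) = (m:ℝ) + 1/2 :=
    Real.exp_log (by positivity)
  rw [e1, e2, e3, div_div]

lemma key (m n : ℕ) (hmn : m ≤ n) :
    ((m:ℝ)+1)^(m+1) * ((n:ℝ)^n * ((n:ℝ)+1/2)) ≤
      ((n:ℝ)+1)^(n+1) * ((m:ℝ)^m * ((m:ℝ)+1/2)) := by
  rcases eq_or_lt_of_le hmn with rfl | hlt
  · exact le_of_eq (by ring)
  have hn : 1 ≤ n := by omega
  have hn0 : (0:ℝ) < n := by exact_mod_cast hn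
  rcases Nat.eq_zero_or_pos m with rfl | hm
  · -- need 2 * (n+1/2) * n^n ≤ (n+1)^{n+1}
    have hinv : (n:ℝ) * (1/(n:ℝ)) = 1 := by field_simp
    have h2 : (2:ℝ) ≤ (1 + 1/(n:ℝ))^n := by
      have hge : (-2:ℝ) ≤ 1/(n:ℝ) := le_trans (by norm_num : (-2:ℝ) ≤ 0) (by positivity)
      have h := one_add_mul_le_pow hge n
      rw [hinv] at h
      linarith
    have hsplit : ((n:ℝ)+1)^n = (n:ℝ)^n * (1 + 1/(n:ℝ))^n := by
      rw [← mul_pow]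
      congr 1
      field_simp
    have hnn := pow_self_pos n
    have h3 : (2:ℝ) * (n:ℝ)^n ≤ ((n:ℝ)+1)^n := by
      rw [hsplit]
      nlinarith
    have h4 : ((n:ℝ)+1)^(n+1) = ((n:ℝ)+1)^n * ((n:ℝ)+1) := by ring
    have h5 : 2*(n:ℝ)^n * ((n:ℝ)+1) ≤ ((n:ℝ)+1)^(n+1) := by
      rw [h4]
      nlinarith
    simp only [Nat.cast_zero, pow_zero, zero_add, pow_one, one_mul]
    nlinarith
  · -- 1 ≤ m ≤ n
    have hF := Ffun_mono (Set.mem_Ici.2 (by exact_mod_cast hm : (1:ℝ) ≤ m))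
      (Set.mem_Ici.2 (by exact_mod_cast hn : (1:ℝ) ≤ n))
      (by exact_mod_cast hmn)
    have := Real.exp_le_exp.2 hF
    rw [exp_Ffun m hm, exp_Ffun n hn] at this
    have hmp : (0:ℝ) < (m:ℝ)^m * ((m:ℝ)+1/2) := by
      have h0 : (0:ℝ) < m := by exact_mod_cast hm
      positivity
    have hnp : (0:ℝ) < (n:ℝ)^n * ((n:ℝ)+1/2) := by positivity
    rw [div_le_div_iff₀ hmp hnp] at this
    linarith

lemma Gamma_half_pos : 0 < Real.Gamma (1/2) := Real.Gamma_pos_of_pos (by norm_num)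

lemma Gamma_nat_half_pos (a : ℕ) : 0 < Real.Gamma ((a:ℝ) + 1/2) :=
  Real.Gamma_pos_of_pos (by positivity)

lemma main_aux : ∀ (n : ℕ) (J : ℕ), 1 ≤ J → ∀ (m : Fin J → ℕ), (∑ j, m j) = n →
    (∏ j, (m j : ℝ) ^ (m j)) * (Real.Gamma (1/2) ^ (J-1) * Real.Gamma ((n:ℝ)+1/2)) ≤
      (n:ℝ)^n * ∏ j, Real.Gamma ((m j:ℝ) + 1/2) := by
  intro n
  induction n with
  | zero =>
      intro J hJ m hsum
      have hz : ∀ j, m j = 0 := by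
        intro j
        have := Finset.sum_eq_zero_iff.1 hsum j (Finset.mem_univ j)
        exact this
      have h1 : (∏ j, (m j : ℝ) ^ (m j)) = 1 := by
        apply Finset.prod_eq_one
        intro j _
        rw [hz j]
        simp
      have h2 : (∏ j, Real.Gamma ((m j:ℝ) + 1/2)) = Real.Gamma (1/2) ^ J := by
        have he : ∀ j : Fin J, Real.Gamma ((m j:ℝ) + 1/2) = Real.Gamma (1/2) := fun j => by
          rw [hz j]; norm_num
        rw [Finset.prod_congr rfl (fun j _ => he j), Finset.prod_const, Finset.card_univ,
          Fintype.card_fin]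
      rw [h1, h2]
      simp only [Nat.cast_zero, pow_zero, one_mul, zero_add]
      rw [← pow_succ, Nat.sub_add_cancel hJ]
  | succ n ih =>
      intro J hJ m hsum
      -- find i with m i ≠ 0
      have hex : ∃ i, m i ≠ 0 := by
        by_contra h
        push_neg at h
        have : (∑ j, m j) = 0 := Finset.sum_eq_zero (fun j _ => h j)
        omega
      obtain ⟨i, hi⟩ := hex
      set a := m i - 1 with ha
      have hmi : m i = a + 1 := by omega
      set m' := Function.update m i a with hm'
      have hsum' : (∑ j, m' j) = n := by
        have h1 : (∑ j, m' j) = a + ∑ j ∈ Finset.univ.erase i, m j := by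
          rw [hm', Finset.sum_update_of_mem (Finset.mem_univ i),
            Finset.sdiff_singleton_eq_erase]
        have h2 : (∑ j, m j) = m i + ∑ j ∈ Finset.univ.erase i, m j :=
          (Finset.add_sum_erase _ _ (Finset.mem_univ i)).symm
        omega
      have IH := ih J hJ m' hsum'
      -- decompose products
      set A : ℝ := ∏ j ∈ Finset.univ.erase i, (m j : ℝ) ^ (m j) with hA
      set B : ℝ := ∏ j ∈ Finset.univ.erase i, Real.Gamma ((m j:ℝ) + 1/2) with hB
      have hPm : (∏ j, (m j : ℝ) ^ (m j)) = (m i : ℝ)^(m i) * A :=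
        (Finset.mul_prod_erase _ _ (Finset.mem_univ i)).symm
      have hPm' : (∏ j, (m' j : ℝ) ^ (m' j)) = (a : ℝ)^a * A := by
        rw [← Finset.mul_prod_erase _ _ (Finset.mem_univ i)]
        congr 1
        · rw [hm', Function.update_self]
        · apply Finset.prod_congr rfl
          intro j hj
          rw [hm', Function.update_of_ne (Finset.mem_erase.1 hj).1]
      have hPG : (∏ j, Real.Gamma ((m j:ℝ) + 1/2)) = Real.Gamma ((m i:ℝ) + 1/2) * B :=
        (Finset.mul_prod_erase _ _ (Finset.mem_univ i)).symm
      have hPG' : (∏ j, Real.Gamma ((m' j:ℝ) + 1/2)) = Real.Gamma ((a:ℝ) + 1/2) * B := by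
        rw [← Finset.mul_prod_erase _ _ (Finset.mem_univ i)]
        congr 1
        · rw [hm', Function.update_self]
        · apply Finset.prod_congr rfl
          intro j hj
          rw [hm', Function.update_of_ne (Finset.mem_erase.1 hj).1]
      -- Gamma recurrences
      have hGmi : Real.Gamma ((m i:ℝ) + 1/2) = ((a:ℝ) + 1/2) * Real.Gamma ((a:ℝ) + 1/2) := by
        have : (m i : ℝ) + 1/2 = ((a:ℝ) + 1/2) + 1 := by rw [hmi]; push_cast; ring
        rw [this, Real.Gamma_add_one (by positivity)]
      have hGn : Real.Gamma (((n+1:ℕ):ℝ) + 1/2) = ((n:ℝ) + 1/2) * Real.Gamma ((n:ℝ) + 1/2) := by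
        have : ((n+1:ℕ):ℝ) + 1/2 = ((n:ℝ) + 1/2) + 1 := by push_cast; ring
        rw [this, Real.Gamma_add_one (by positivity)]
      rw [hPm, hPG, hGmi, hGn]
      rw [hPm', hPG'] at IH
      -- key inequality
      have hmile : m i ≤ ∑ j, m j :=
        Finset.single_le_sum (f := m) (fun _ _ => Nat.zero_le _) (Finset.mem_univ i)
      have hale : a ≤ n := by omega
      have hkey := key a n hale
      -- nonnegativity facts
      have hA0 : 0 ≤ A := Finset.prod_nonneg (fun j _ => by positivity)
      have hB0 : 0 ≤ B := Finset.prod_nonneg (fun j _ => (Gamma_nat_half_pos (m j)).le)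
      have haa := pow_self_pos a
      have hnn := pow_self_pos n
      have hG := Gamma_half_pos
      have hGa := Gamma_nat_half_pos a
      have hGnn := Gamma_nat_half_pos n
      have hL2nn : (0:ℝ) ≤ ((a:ℝ)+1)^(a+1) * ((n:ℝ)^n * ((n:ℝ)+1/2)) := by positivity
      have hR1nn : (0:ℝ) ≤ (n:ℝ)^n * (Real.Gamma ((a:ℝ)+1/2) * B) := by positivity
      have hprod := mul_le_mul IH hkey hL2nn hR1nn
      -- rearrange
      have hmi' : (m i : ℝ) = (a:ℝ) + 1 := by rw [hmi]; push_cast; ring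
      have hmipow : (m i : ℝ)^(m i) = ((a:ℝ)+1)^(a+1) := by rw [hmi]; push_cast; ring
      rw [hmipow]
      have hcast : ((n+1:ℕ):ℝ) = (n:ℝ)+1 := by push_cast; ring
      rw [hcast]
      have hpos : (0:ℝ) < (a:ℝ)^a * (n:ℝ)^n := by positivity
      rw [← mul_le_mul_iff_left₀ hpos]
      calc ((a:ℝ)+1)^(a+1) * A * (Real.Gamma (1/2) ^ (J-1) * (((n:ℝ)+1/2) * Real.Gamma ((n:ℝ)+1/2))) * ((a:ℝ)^a * (n:ℝ)^n)
          = ((a:ℝ)^a * A * (Real.Gamma (1/2) ^ (J-1) * Real.Gamma ((n:ℝ)+1/2))) *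
              (((a:ℝ)+1)^(a+1) * ((n:ℝ)^n * ((n:ℝ)+1/2))) := by ring
        _ ≤ ((n:ℝ)^n * (Real.Gamma ((a:ℝ)+1/2) * B)) *
              (((n:ℝ)+1)^(n+1) * ((a:ℝ)^a * ((a:ℝ)+1/2))) := hprod
        _ = ((n:ℝ)+1)^(n+1) * (((a:ℝ)+1/2) * Real.Gamma ((a:ℝ)+1/2) * B) * ((a:ℝ)^a * (n:ℝ)^n) := by ring

end GammaIneqAux

/-- **Gamma-function inequality** (Davisson et al.).  For nonnegative integers
`n = n₁ + ⋯ + n_J ≥ 1`,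
`∏ (n_j/n)^{n_j} / ∏ Γ(n_j + 1/2) ≤ 1 / (Γ(n + 1/2)·Γ(1/2)^{J−1})`. -/
theorem gamma_product_inequality (J n : ℕ) (m : Fin J → ℕ)
    (hsum : n = ∑ j, m j) (hn : 1 ≤ n) :
    (∏ j, ((m j : ℝ) / n) ^ m j) / ∏ j, Real.Gamma ((m j : ℝ) + 1 / 2) ≤
      1 / (Real.Gamma ((n : ℝ) + 1 / 2) * Real.Gamma (1 / 2) ^ (J - 1)) := by

  have hJ : 1 ≤ J := by
    rcases Nat.eq_zero_or_pos J with rfl | h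
    · simp at hsum; omega
    · exact h
  have hn0 : (0:ℝ) < n := by exact_mod_cast hn
  have hP : (0:ℝ) < ∏ j, Real.Gamma ((m j : ℝ) + 1/2) :=
    Finset.prod_pos (fun j _ => Gamma_nat_half_pos (m j))
  have hQ : (0:ℝ) < Real.Gamma ((n:ℝ) + 1/2) * Real.Gamma (1/2) ^ (J-1) := by
    have := Gamma_half_pos
    have := Gamma_nat_half_pos n
    positivity
  rw [div_le_div_iff₀ hP hQ, one_mul]
  have hprod : (∏ j, ((m j : ℝ) / n) ^ m j) = (∏ j, (m j : ℝ) ^ m j) / (n:ℝ)^n := by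
    simp_rw [div_pow]
    rw [Finset.prod_div_distrib, Finset.prod_pow_eq_pow_sum, ← hsum]
  rw [hprod]
  have h := main_aux n J hJ m hsum.symm
  rw [div_mul_eq_mul_div, div_le_iff₀ (pow_self_pos n)]
  calc (∏ j, (m j : ℝ) ^ m j) * (Real.Gamma ((n:ℝ) + 1/2) * Real.Gamma (1/2) ^ (J-1))
      = (∏ j, (m j : ℝ) ^ m j) * (Real.Gamma (1/2) ^ (J-1) * Real.Gamma ((n:ℝ) + 1/2)) := by ring
    _ ≤ (n:ℝ)^n * ∏ j, Real.Gamma ((m j:ℝ) + 1/2) := h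
    _ = (∏ j, Real.Gamma ((m j:ℝ) + 1/2)) * (n:ℝ)^n := by ring


end SBM
end

section
/- For every k ≥ 1, n ≥ 1 and every labeling z ∈ [k]^n, the likelihood-to-mixture ratio for the labels satisfies ( ∏_{a=1}^k (n_a(z)/n)^{n_a(z)} ) / KT_{n,k}(z) ≤ Γ(1/2)·Γ(n + k/2) / ( Γ(k/2)·Γ(n + 1/2) ), where KT_{n,k}(z) = (Γ(k/2)/Γ(1/2)^k)·(∏_{a=1}^k Γ(n_a(z)+1/2))/Γ(n+k/2) and the convention 0^0 = 1 is used. In particular this bounds sup_π ∏_a π_a^{n_a(z)} / KT_{n,k}(z), since the supremum over the probability simplex is attained at π_a = n_a(z)/n. -/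
open MeasureTheory Filter
open scoped Classical

namespace SBM

/-! ### Auxiliary lemmas for `label_ratio_bound` -/

/-- `fKT m = ∏_{j<m} (j + 1/2) = Γ(m+1/2)/Γ(1/2)`. -/
noncomputable def fKT : ℕ → ℝ := fun m => ∏ j ∈ Finset.range m, ((j : ℝ) + 1 / 2)

lemma fKT_pos (m : ℕ) : 0 < fKT m :=
  Finset.prod_pos fun j _ => by positivity

lemma fKT_succ (m : ℕ) : fKT (m + 1) = fKT m * ((m : ℝ) + 1 / 2) := by
  simp [fKT, Finset.prod_range_succ]

lemma Gamma_half_eq (m : ℕ) :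
    Real.Gamma ((m : ℝ) + 1 / 2) = fKT m * Real.Gamma (1 / 2) := by
  induction m with
  | zero => simp [fKT]
  | succ m ih =>
    have h : ((m : ℝ) + 1 / 2) ≠ 0 := by positivity
    have e : ((m + 1 : ℕ) : ℝ) + 1 / 2 = ((m : ℝ) + 1 / 2) + 1 := by push_cast; ring
    rw [e, Real.Gamma_add_one h, ih, fKT_succ]; ring

lemma binom_cubic (M : ℕ) {x : ℝ} (hx : 0 ≤ x) (hx1 : x ≤ 1) :
    1 - (M : ℝ) * x + (M : ℝ) * ((M : ℝ) - 1) / 2 * x ^ 2 -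
      (M : ℝ) * ((M : ℝ) - 1) * ((M : ℝ) - 2) / 6 * x ^ 3 ≤ (1 - x) ^ M := by
  induction M with
  | zero => norm_num
  | succ M ih =>
    have hM : (0 : ℝ) ≤ (M : ℝ) * ((M : ℝ) - 1) * ((M : ℝ) - 2) := by
      rcases M with _ | _ | M
      · norm_num
      · norm_num
      · push_cast
        have h0 : (0 : ℝ) ≤ (M : ℝ) := Nat.cast_nonneg M
        nlinarith [h0, mul_nonneg h0 h0, mul_nonneg (mul_nonneg h0 h0) h0]
    have h1x : (0 : ℝ) ≤ 1 - x := by linarith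
    have h2 := mul_le_mul_of_nonneg_right ih h1x
    have hid : (1 - (M : ℝ) * x + (M : ℝ) * ((M : ℝ) - 1) / 2 * x ^ 2 -
          (M : ℝ) * ((M : ℝ) - 1) * ((M : ℝ) - 2) / 6 * x ^ 3) * (1 - x)
        = (1 - ((M + 1 : ℕ) : ℝ) * x + ((M + 1 : ℕ) : ℝ) * (((M + 1 : ℕ) : ℝ) - 1) / 2 * x ^ 2 -
            ((M + 1 : ℕ) : ℝ) * (((M + 1 : ℕ) : ℝ) - 1) * (((M + 1 : ℕ) : ℝ) - 2) / 6 * x ^ 3) +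
          (M : ℝ) * ((M : ℝ) - 1) * ((M : ℝ) - 2) / 6 * x ^ 4 := by
      push_cast; ring
    have hx4 : (0 : ℝ) ≤ (M : ℝ) * ((M : ℝ) - 1) * ((M : ℝ) - 2) / 6 * x ^ 4 := by positivity
    have hpow : (1 - x) ^ (M + 1) = (1 - x) ^ M * (1 - x) := by ring
    rw [hpow]
    linarith [hid ▸ h2]

lemma npow_self_pos (N : ℕ) : 0 < ((N : ℕ) : ℝ) ^ N := by
  cases N with
  | zero => norm_num
  | succ K => exact pow_pos (by exact_mod_cast Nat.succ_pos K) _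

lemma hmono_step (N : ℕ) :
    ((N : ℝ) + 1) ^ (2 * N + 2) * (2 * (N : ℝ) + 3) ≤
      ((N : ℝ) + 2) ^ (N + 2) * (N : ℝ) ^ N * (2 * (N : ℝ) + 1) := by
  rcases N with _ | K
  · norm_num
  · obtain ⟨m, hm_def⟩ : ∃ m : ℝ, m = (K : ℝ) + 2 := ⟨_, rfl⟩
    have hm : (2 : ℝ) ≤ m := by
      rw [hm_def]; linarith [Nat.cast_nonneg (α := ℝ) K]
    have hm0 : (0 : ℝ) < m := by linarith
    have hm1 : (0 : ℝ) < m - 1 := by linarith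
    have hx0 : (0 : ℝ) ≤ 1 / m ^ 2 := by positivity
    have hx1 : 1 / m ^ 2 ≤ 1 := by
      rw [div_le_one (by positivity)]; nlinarith
    have hb := binom_cubic (K + 2) hx0 hx1
    have hcast : ((K + 2 : ℕ) : ℝ) = m := by rw [hm_def]; push_cast; ring
    rw [hcast] at hb
    obtain ⟨Q, hQ_def⟩ : ∃ Q : ℝ, Q = 1 - m * (1 / m ^ 2) + m * (m - 1) / 2 * (1 / m ^ 2) ^ 2 -
      m * (m - 1) * (m - 2) / 6 * (1 / m ^ 2) ^ 3 := ⟨_, rfl⟩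
    rw [← hQ_def] at hb
    -- Step B : (2m+1)(m-1) ≤ Q·(2m-1)(m+1)
    have hQdiff : Q * ((2 * m - 1) * (m + 1)) - (2 * m + 1) * (m - 1)
        = (m - 1) * (m ^ 3 + 3 * m - 2) / (6 * m ^ 5) := by
      rw [hQ_def]; field_simp; ring
    have hfac : (0 : ℝ) ≤ (m - 1) * (m ^ 3 + 3 * m - 2) / (6 * m ^ 5) := by
      have h1 : (0 : ℝ) ≤ m ^ 3 + 3 * m - 2 := by nlinarith
      positivity
    have stepB : (2 * m + 1) * (m - 1) ≤ Q * ((2 * m - 1) * (m + 1)) := by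
      have h' := hfac
      rw [← hQdiff] at h'
      linarith
    -- multiply binomial bound by m^(2(K+2))
    have hmp : (0 : ℝ) < m ^ (2 * (K + 2)) := by positivity
    have hsplit : (1 - 1 / m ^ 2) ^ (K + 2) * m ^ (2 * (K + 2))
        = ((m - 1) * (m + 1)) ^ (K + 2) := by
      rw [pow_mul, ← mul_pow]
      congr 1
      field_simp
      ring
    have hA : Q * m ^ (2 * (K + 2)) ≤ ((m - 1) * (m + 1)) ^ (K + 2) := by
      calc Q * m ^ (2 * (K + 2)) ≤ (1 - 1 / m ^ 2) ^ (K + 2) * m ^ (2 * (K + 2)) :=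
            mul_le_mul_of_nonneg_right hb hmp.le
        _ = ((m - 1) * (m + 1)) ^ (K + 2) := hsplit
    -- combine
    have hchain : m ^ (2 * (K + 2)) * ((2 * m + 1) * (m - 1)) ≤
        ((m - 1) * (m + 1)) ^ (K + 2) * ((2 * m - 1) * (m + 1)) := by
      calc m ^ (2 * (K + 2)) * ((2 * m + 1) * (m - 1))
          ≤ m ^ (2 * (K + 2)) * (Q * ((2 * m - 1) * (m + 1))) :=
            mul_le_mul_of_nonneg_left stepB hmp.le
        _ = (Q * m ^ (2 * (K + 2))) * ((2 * m - 1) * (m + 1)) := by ring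
        _ ≤ ((m - 1) * (m + 1)) ^ (K + 2) * ((2 * m - 1) * (m + 1)) := by
            have hnn : (0 : ℝ) ≤ (2 * m - 1) * (m + 1) := by nlinarith
            exact mul_le_mul_of_nonneg_right hA hnn
    have hexpand : ((m - 1) * (m + 1)) ^ (K + 2) * ((2 * m - 1) * (m + 1))
        = ((m + 1) ^ (K + 3) * (m - 1) ^ (K + 1) * (2 * m - 1)) * (m - 1) := by
      rw [mul_pow]
      ring
    have hfinal : m ^ (2 * (K + 2)) * (2 * m + 1) * (m - 1) ≤
        ((m + 1) ^ (K + 3) * (m - 1) ^ (K + 1) * (2 * m - 1)) * (m - 1) := by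
      calc m ^ (2 * (K + 2)) * (2 * m + 1) * (m - 1)
          = m ^ (2 * (K + 2)) * ((2 * m + 1) * (m - 1)) := by ring
        _ ≤ ((m - 1) * (m + 1)) ^ (K + 2) * ((2 * m - 1) * (m + 1)) := hchain
        _ = ((m + 1) ^ (K + 3) * (m - 1) ^ (K + 1) * (2 * m - 1)) * (m - 1) := hexpand
    have hmain : m ^ (2 * (K + 2)) * (2 * m + 1) ≤
        (m + 1) ^ (K + 3) * (m - 1) ^ (K + 1) * (2 * m - 1) := by
      have := (mul_le_mul_iff_of_pos_right hm1).mp (by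
        calc m ^ (2 * (K + 2)) * (2 * m + 1) * (m - 1)
            ≤ ((m + 1) ^ (K + 3) * (m - 1) ^ (K + 1) * (2 * m - 1)) * (m - 1) := hfinal)
      exact this
    -- translate back to the goal
    have e1 : ((K + 1 : ℕ) : ℝ) + 1 = m := by rw [hm_def]; push_cast; ring
    have e2 : ((K + 1 : ℕ) : ℝ) + 2 = m + 1 := by rw [hm_def]; push_cast; ring
    have e3 : ((K + 1 : ℕ) : ℝ) = m - 1 := by rw [hm_def]; push_cast; ring
    have e4 : 2 * ((K + 1 : ℕ) : ℝ) + 3 = 2 * m + 1 := by rw [hm_def]; push_cast; ring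
    have e5 : 2 * ((K + 1 : ℕ) : ℝ) + 1 = 2 * m - 1 := by rw [hm_def]; push_cast; ring
    have eexp : 2 * (K + 1) + 2 = 2 * (K + 2) := by omega
    have eexp2 : (K + 1) + 2 = K + 3 := by omega
    rw [e4, e5, e1, e2, e3, eexp, eexp2]
    exact hmain

/-- The per-step ratio `H N = (N+1)^{N+1} / (N^N (N+1/2))` is monotone. -/
lemma H_mono : Monotone (fun N : ℕ => ((N : ℝ) + 1) ^ (N + 1) / ((N : ℝ) ^ N * ((N : ℝ) + 1 / 2))) := by
  apply monotone_nat_of_le_succ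
  intro N
  have hd1 : (0 : ℝ) < (N : ℝ) ^ N * ((N : ℝ) + 1 / 2) := by
    have := npow_self_pos N
    positivity
  have hd2 : (0 : ℝ) < (((N + 1 : ℕ) : ℝ)) ^ (N + 1) * (((N + 1 : ℕ) : ℝ) + 1 / 2) := by
    have h1 : (0 : ℝ) < ((N + 1 : ℕ) : ℝ) := by exact_mod_cast Nat.succ_pos N
    positivity
  rw [div_le_div_iff₀ hd1 hd2]
  have h := hmono_step N
  have e : ((N : ℝ) + 1) ^ (2 * N + 2) = ((N : ℝ) + 1) ^ (N + 1) * ((N : ℝ) + 1) ^ (N + 1) := by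
    rw [← pow_add]; congr 1; omega
  rw [e] at h
  have ecast : ((N + 1 : ℕ) : ℝ) = (N : ℝ) + 1 := by push_cast; ring
  rw [ecast]
  have eexp : N + 1 + 1 = N + 2 := by omega
  rw [eexp]
  have e2 : ((N : ℝ) + 1 + 1) = (N : ℝ) + 2 := by ring
  rw [e2]
  linarith [h]

/-- `gKT m = m^m / fKT m`. -/
noncomputable def gKT : ℕ → ℝ := fun m => ((m : ℕ) : ℝ) ^ m / fKT m

lemma gKT_pos (m : ℕ) : 0 < gKT m := div_pos (npow_self_pos m) (fKT_pos m)

lemma gKT_zero : gKT 0 = 1 := by simp [gKT, fKT]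

lemma gKT_succ (N : ℕ) :
    gKT (N + 1) = gKT N * (((N : ℝ) + 1) ^ (N + 1) / ((N : ℝ) ^ N * ((N : ℝ) + 1 / 2))) := by
  have h1 : ((N : ℝ)) ^ N ≠ 0 := (npow_self_pos N).ne'
  have h2 : fKT N ≠ 0 := (fKT_pos N).ne'
  have h3 : ((N : ℝ) + 1 / 2) ≠ 0 := by positivity
  simp only [gKT, fKT_succ]
  push_cast
  field_simp

lemma gKT_supermul (m m' : ℕ) : gKT m * gKT m' ≤ gKT (m + m') := by
  induction m' with
  | zero => simp [gKT_zero]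
  | succ m' ih =>
    have hH : ((m' : ℝ) + 1) ^ (m' + 1) / ((m' : ℝ) ^ m' * ((m' : ℝ) + 1 / 2)) ≤
        (((m + m' : ℕ) : ℝ) + 1) ^ ((m + m') + 1) /
          (((m + m' : ℕ) : ℝ) ^ (m + m') * (((m + m' : ℕ) : ℝ) + 1 / 2)) :=
      H_mono (Nat.le_add_left m' m)
    have hHnn : (0 : ℝ) ≤ ((m' : ℝ) + 1) ^ (m' + 1) / ((m' : ℝ) ^ m' * ((m' : ℝ) + 1 / 2)) := by
      have := npow_self_pos m'
      positivity
    have hstep : m + (m' + 1) = (m + m') + 1 := by omega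
    rw [hstep, gKT_succ, gKT_succ]
    calc gKT m * (gKT m' * (((m' : ℝ) + 1) ^ (m' + 1) / ((m' : ℝ) ^ m' * ((m' : ℝ) + 1 / 2))))
        = (gKT m * gKT m') * (((m' : ℝ) + 1) ^ (m' + 1) / ((m' : ℝ) ^ m' * ((m' : ℝ) + 1 / 2))) := by
          ring
      _ ≤ gKT (m + m') * (((m' : ℝ) + 1) ^ (m' + 1) / ((m' : ℝ) ^ m' * ((m' : ℝ) + 1 / 2))) :=
          mul_le_mul_of_nonneg_right ih hHnn
      _ ≤ gKT (m + m') * ((((m + m' : ℕ) : ℝ) + 1) ^ ((m + m') + 1) /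
            (((m + m' : ℕ) : ℝ) ^ (m + m') * (((m + m' : ℕ) : ℝ) + 1 / 2))) :=
          mul_le_mul_of_nonneg_left hH (gKT_pos (m + m')).le

lemma gKT_prod {α : Type*} (s : Finset α) (c : α → ℕ) :
    ∏ a ∈ s, gKT (c a) ≤ gKT (∑ a ∈ s, c a) := by
  classical
  induction s using Finset.cons_induction with
  | empty => simp [gKT_zero]
  | cons a s ha ih =>
    rw [Finset.prod_cons, Finset.sum_cons]
    calc gKT (c a) * ∏ b ∈ s, gKT (c b)
        ≤ gKT (c a) * gKT (∑ b ∈ s, c b) :=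
          mul_le_mul_of_nonneg_left ih (gKT_pos (c a)).le
      _ ≤ gKT (c a + ∑ b ∈ s, c b) := gKT_supermul _ _

lemma key_prod {k n : ℕ} (hn : 1 ≤ n) (c : Fin k → ℕ) (hc : ∑ a, c a = n) :
    (∏ a, ((c a : ℝ) / n) ^ c a) * fKT n ≤ ∏ a, fKT (c a) := by
  have hg := gKT_prod Finset.univ c
  rw [hc] at hg
  have hnpos : (0 : ℝ) < (n : ℝ) := by exact_mod_cast hn
  have hFpos : (0 : ℝ) < ∏ a, fKT (c a) := Finset.prod_pos fun a _ => fKT_pos (c a)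
  simp only [gKT] at hg
  rw [Finset.prod_div_distrib] at hg
  rw [div_le_div_iff₀ hFpos (fKT_pos n)] at hg
  have hP : ∏ a, ((c a : ℝ) / n) ^ c a = (∏ a, ((c a : ℕ) : ℝ) ^ c a) / (n : ℝ) ^ n := by
    rw [← hc, ← Finset.prod_pow_eq_pow_sum, ← Finset.prod_div_distrib]
    exact Finset.prod_congr rfl fun a _ => by rw [div_pow]
  rw [hP, div_mul_eq_mul_div, div_le_iff₀ (by positivity)]
  calc (∏ a, ((c a : ℕ) : ℝ) ^ c a) * fKT n ≤ (n : ℝ) ^ n * ∏ a, fKT (c a) := hg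
    _ = (∏ a, fKT (c a)) * (n : ℝ) ^ n := by ring

lemma gibbs_term {n : ℕ} (hn : 1 ≤ n) (cc : ℕ) {p : ℝ} (hp : 0 < p) :
    p ^ cc ≤ ((cc : ℝ) / n) ^ cc * Real.exp ((n : ℝ) * p - cc) := by
  have hnpos : (0 : ℝ) < (n : ℝ) := by exact_mod_cast hn
  rcases Nat.eq_zero_or_pos cc with h | h
  · subst h
    simpa using Real.one_le_exp (by positivity)
  · have hcc : (0 : ℝ) < (cc : ℝ) := by exact_mod_cast h
    set x : ℝ := (n : ℝ) * p / cc with hx_def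
    have hx : 0 < x := by positivity
    have hxe : x ≤ Real.exp (x - 1) := by
      have := Real.add_one_le_exp (x - 1)
      linarith
    have hpow : x ^ cc ≤ Real.exp (x - 1) ^ cc := pow_le_pow_left₀ hx.le hxe cc
    have hxp : Real.exp (x - 1) ^ cc = Real.exp ((cc : ℝ) * (x - 1)) :=
      (Real.exp_nat_mul _ _).symm
    have hx1 : (cc : ℝ) * (x - 1) = (n : ℝ) * p - cc := by
      rw [hx_def]; field_simp
    have hpe : p = ((cc : ℝ) / n) * x := by
      rw [hx_def]; field_simp
    calc p ^ cc = ((cc : ℝ) / n) ^ cc * x ^ cc := by rw [hpe, mul_pow]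
      _ ≤ ((cc : ℝ) / n) ^ cc * Real.exp ((n : ℝ) * p - cc) := by
          rw [← hx1, ← hxp]
          exact mul_le_mul_of_nonneg_left hpow (by positivity)

lemma gibbs {k n : ℕ} (hn : 1 ≤ n) (c : Fin k → ℕ) (hc : ∑ a, c a = n)
    (π : Fin k → ℝ) (hπ : ∀ a, 0 < π a) (hs : (∑ a, π a) = 1) :
    ∏ a, π a ^ c a ≤ ∏ a, ((c a : ℝ) / n) ^ c a := by
  have h1 : ∏ a, π a ^ c a ≤
      ∏ a, (((c a : ℝ) / n) ^ c a * Real.exp ((n : ℝ) * π a - c a)) :=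
    Finset.prod_le_prod (fun a _ => pow_nonneg (hπ a).le _)
      (fun a _ => gibbs_term hn (c a) (hπ a))
  rw [Finset.prod_mul_distrib, ← Real.exp_sum] at h1
  have hz : ∑ a, ((n : ℝ) * π a - (c a : ℝ)) = 0 := by
    rw [Finset.sum_sub_distrib, ← Finset.mul_sum, hs]
    have : ∑ a, ((c a : ℕ) : ℝ) = ((∑ a, c a : ℕ) : ℝ) := by push_cast; ring
    rw [this, hc]
    ring
  rw [hz, Real.exp_zero, mul_one] at h1
  exact h1

lemma sum_nCount {k n : ℕ} (z : Fin n → Fin k) : ∑ a, nCount z a = n := by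
  classical
  simp only [nCount]
  have := Finset.card_eq_sum_card_fiberwise
    (s := (Finset.univ : Finset (Fin n))) (t := (Finset.univ : Finset (Fin k)))
    (f := z) (fun x _ => Finset.mem_univ _)
  simpa [Finset.card_univ] using this.symm

lemma label_ratio_bound_aux (k n : ℕ) (hk : 1 ≤ k) (hn : 1 ≤ n) (c : Fin k → ℕ)
    (hc : ∑ a, c a = n) :
    (∏ a, ((c a : ℝ) / n) ^ c a) /
        (Real.Gamma ((k : ℝ) / 2) / Real.Gamma (1 / 2) ^ k *
          (∏ a, Real.Gamma ((c a : ℝ) + 1 / 2)) /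
            Real.Gamma ((n : ℝ) + (k : ℝ) / 2)) ≤
      Real.Gamma (1 / 2) * Real.Gamma ((n : ℝ) + (k : ℝ) / 2) /
        (Real.Gamma ((k : ℝ) / 2) * Real.Gamma ((n : ℝ) + 1 / 2)) ∧
    sSup {v : ℝ | ∃ π : Fin k → ℝ, (∀ a, 0 < π a) ∧ (∑ a, π a) = 1 ∧
          v = ∏ a, π a ^ c a} /
        (Real.Gamma ((k : ℝ) / 2) / Real.Gamma (1 / 2) ^ k *
          (∏ a, Real.Gamma ((c a : ℝ) + 1 / 2)) /
            Real.Gamma ((n : ℝ) + (k : ℝ) / 2)) ≤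
      Real.Gamma (1 / 2) * Real.Gamma ((n : ℝ) + (k : ℝ) / 2) /
        (Real.Gamma ((k : ℝ) / 2) * Real.Gamma ((n : ℝ) + 1 / 2)) := by
  classical
  have hnpos : (0 : ℝ) < (n : ℝ) := by exact_mod_cast hn
  have hG12 : (0 : ℝ) < Real.Gamma (1 / 2) := Real.Gamma_pos_of_pos (by norm_num)
  have hGk : (0 : ℝ) < Real.Gamma ((k : ℝ) / 2) := by
    apply Real.Gamma_pos_of_pos
    have : (0 : ℝ) < (k : ℝ) := by exact_mod_cast hk
    linarith
  have hGN : (0 : ℝ) < Real.Gamma ((n : ℝ) + (k : ℝ) / 2) := by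
    apply Real.Gamma_pos_of_pos
    have : (0 : ℝ) < (k : ℝ) := by exact_mod_cast hk
    linarith
  have hFpos : (0 : ℝ) < ∏ a, fKT (c a) := Finset.prod_pos fun a _ => fKT_pos (c a)
  have hPnn : (0 : ℝ) ≤ ∏ a, ((c a : ℝ) / n) ^ c a :=
    Finset.prod_nonneg fun a _ => by positivity
  -- rewrite the product of Gammas
  have hGammaProd : (∏ a, Real.Gamma ((c a : ℝ) + 1 / 2)) =
      (∏ a, fKT (c a)) * Real.Gamma (1 / 2) ^ k := by
    have h1 : (∏ a, Real.Gamma ((c a : ℝ) + 1 / 2)) =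
        ∏ a, (fKT (c a) * Real.Gamma (1 / 2)) :=
      Finset.prod_congr rfl fun a _ => Gamma_half_eq (c a)
    rw [h1, Finset.prod_mul_distrib, Finset.prod_const, Finset.card_univ, Fintype.card_fin]
  have hGamman : Real.Gamma ((n : ℝ) + 1 / 2) = fKT n * Real.Gamma (1 / 2) := Gamma_half_eq n
  -- the denominator equals Γ(k/2)·F / Γ(n+k/2)
  have hD : Real.Gamma ((k : ℝ) / 2) / Real.Gamma (1 / 2) ^ k *
        (∏ a, Real.Gamma ((c a : ℝ) + 1 / 2)) / Real.Gamma ((n : ℝ) + (k : ℝ) / 2)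
      = Real.Gamma ((k : ℝ) / 2) * (∏ a, fKT (c a)) / Real.Gamma ((n : ℝ) + (k : ℝ) / 2) := by
    rw [hGammaProd]
    field_simp
  -- the RHS equals Γ(n+k/2)/(Γ(k/2)·fKT n)
  have hR : Real.Gamma (1 / 2) * Real.Gamma ((n : ℝ) + (k : ℝ) / 2) /
        (Real.Gamma ((k : ℝ) / 2) * Real.Gamma ((n : ℝ) + 1 / 2))
      = Real.Gamma ((n : ℝ) + (k : ℝ) / 2) / (Real.Gamma ((k : ℝ) / 2) * fKT n) := by
    rw [hGamman, div_eq_div_iff (mul_pos hGk (mul_pos (fKT_pos n) hG12)).ne'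
      (mul_pos hGk (fKT_pos n)).ne']
    ring
  have hkey : (∏ a, ((c a : ℝ) / n) ^ c a) * fKT n ≤ ∏ a, fKT (c a) := key_prod hn c hc
  -- Part 1
  have part1 : (∏ a, ((c a : ℝ) / n) ^ c a) /
      (Real.Gamma ((k : ℝ) / 2) * (∏ a, fKT (c a)) / Real.Gamma ((n : ℝ) + (k : ℝ) / 2)) ≤
      Real.Gamma ((n : ℝ) + (k : ℝ) / 2) / (Real.Gamma ((k : ℝ) / 2) * fKT n) := by
    rw [div_div_eq_mul_div, div_le_div_iff₀ (mul_pos hGk hFpos) (mul_pos hGk (fKT_pos n))]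
    calc (∏ a, ((c a : ℝ) / n) ^ c a) * Real.Gamma ((n : ℝ) + (k : ℝ) / 2) *
          (Real.Gamma ((k : ℝ) / 2) * fKT n)
        = ((∏ a, ((c a : ℝ) / n) ^ c a) * fKT n) *
            (Real.Gamma ((n : ℝ) + (k : ℝ) / 2) * Real.Gamma ((k : ℝ) / 2)) := by ring
      _ ≤ (∏ a, fKT (c a)) *
            (Real.Gamma ((n : ℝ) + (k : ℝ) / 2) * Real.Gamma ((k : ℝ) / 2)) :=
          mul_le_mul_of_nonneg_right hkey (mul_pos hGN hGk).le
      _ = Real.Gamma ((n : ℝ) + (k : ℝ) / 2) *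
            (Real.Gamma ((k : ℝ) / 2) * ∏ a, fKT (c a)) := by ring
  constructor
  · rw [hD, hR]
    exact part1
  · rw [hD, hR]
    have hsup : sSup {v : ℝ | ∃ π : Fin k → ℝ, (∀ a, 0 < π a) ∧ (∑ a, π a) = 1 ∧
        v = ∏ a, π a ^ c a} ≤ ∏ a, ((c a : ℝ) / n) ^ c a := by
      apply Real.sSup_le _ hPnn
      rintro v ⟨π, hπ, hπs, rfl⟩
      exact gibbs hn c hc π hπ hπs
    have hDpos : (0 : ℝ) < Real.Gamma ((k : ℝ) / 2) * (∏ a, fKT (c a)) /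
        Real.Gamma ((n : ℝ) + (k : ℝ) / 2) := div_pos (mul_pos hGk hFpos) hGN
    exact le_trans ((div_le_div_iff_of_pos_right hDpos).mpr hsup) part1

/-- **Label likelihood-to-mixture ratio bound.**
`(∏ (n_a/n)^{n_a}) / KT_{n,k}(z) ≤ Γ(1/2)Γ(n+k/2)/(Γ(k/2)Γ(n+1/2))`, where `KT_{n,k}(z)`
is given by its closed form; in particular the same bound holds with the supremum of
`∏ π_a^{n_a}` over the probability simplex in the numerator. -/
theorem label_ratio_bound (k n : ℕ) (hk : 1 ≤ k) (hn : 1 ≤ n) (z : Fin n → Fin k) :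
    (∏ a, ((nCount z a : ℝ) / n) ^ nCount z a) /
        (Real.Gamma ((k : ℝ) / 2) / Real.Gamma (1 / 2) ^ k *
          (∏ a, Real.Gamma ((nCount z a : ℝ) + 1 / 2)) /
            Real.Gamma ((n : ℝ) + (k : ℝ) / 2)) ≤
      Real.Gamma (1 / 2) * Real.Gamma ((n : ℝ) + (k : ℝ) / 2) /
        (Real.Gamma ((k : ℝ) / 2) * Real.Gamma ((n : ℝ) + 1 / 2)) ∧
    sSup {v : ℝ | ∃ π : Fin k → ℝ, (∀ a, 0 < π a) ∧ (∑ a, π a) = 1 ∧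
          v = ∏ a, π a ^ nCount z a} /
        (Real.Gamma ((k : ℝ) / 2) / Real.Gamma (1 / 2) ^ k *
          (∏ a, Real.Gamma ((nCount z a : ℝ) + 1 / 2)) /
            Real.Gamma ((n : ℝ) + (k : ℝ) / 2)) ≤
      Real.Gamma (1 / 2) * Real.Gamma ((n : ℝ) + (k : ℝ) / 2) /
        (Real.Gamma ((k : ℝ) / 2) * Real.Gamma ((n : ℝ) + 1 / 2)) := by
  exact label_ratio_bound_aux k n hk hn (fun a => nCount z a) (sum_nCount z)

end SBM
end

section
/- For integers k ≥ 1 and n ≥ max(4, k), log( Γ(1/2)·Γ(n + k/2) / ( Γ(k/2)·Γ(n + 1/2) ) ) ≤ ((k−1)/2)·log n + k(k−1)/(4n) + 1/(12n) + log( Γ(1/2)/Γ(k/2) ). -/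
open MeasureTheory Filter
open scoped Classical

namespace SBM

private lemma log_gamma_half_step {x : ℝ} (hx : 0 < x) :
    Real.log (Real.Gamma (x + 1/2)) ≤ Real.log (Real.Gamma x) + 1/2 * Real.log x := by
  have h := Real.convexOn_log_Gamma.2 (Set.mem_Ioi.2 hx)
    (Set.mem_Ioi.2 (by linarith : (0:ℝ) < x + 1))
    (by norm_num : (0:ℝ) ≤ (1/2:ℝ)) (by norm_num : (0:ℝ) ≤ (1/2:ℝ)) (by norm_num)
  simp only [Function.comp, smul_eq_mul] at h
  have hx1 : (1/2 : ℝ) * x + (1/2 : ℝ) * (x + 1) = x + 1/2 := by ring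
  rw [hx1, Real.Gamma_add_one hx.ne',
    Real.log_mul hx.ne' (Real.Gamma_pos_of_pos hx).ne'] at h
  linarith

private lemma log_add_le_aux {n t : ℝ} (hn : 0 < n) (ht : 0 ≤ t) :
    Real.log (n + t) ≤ Real.log n + t / n := by
  have h1 : Real.log (n + t) - Real.log n = Real.log ((n + t) / n) :=
    (Real.log_div (by linarith) hn.ne').symm
  have h2 : Real.log ((n + t) / n) ≤ (n + t) / n - 1 :=
    Real.log_le_sub_one_of_pos (by positivity)
  have h3 : (n + t) / n - 1 = t / n := by field_simp; ring
  linarith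

private lemma log_gamma_ratio_aux {n : ℝ} (hn : 1 ≤ n) :
    ∀ k : ℕ, 1 ≤ k →
      Real.log (Real.Gamma (n + (k : ℝ) / 2)) ≤ Real.log (Real.Gamma (n + 1/2))
        + ((k : ℝ) - 1) / 2 * Real.log n + (k : ℝ) * ((k : ℝ) - 1) / (8 * n) := by
  have hn0 : (0:ℝ) < n := by linarith
  intro k hk
  induction k, hk using Nat.le_induction with
  | base => norm_num
  | succ k hk ih =>
    have hx : (0:ℝ) < n + (k : ℝ) / 2 := by positivity
    have hA := log_gamma_half_step hx
    have hB : Real.log (n + (k : ℝ) / 2) ≤ Real.log n + ((k : ℝ) / 2) / n :=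
      log_add_le_aux hn0 (by positivity)
    have hcast : n + ((k : ℕ) + 1 : ℕ) / 2 = (n + (k : ℝ) / 2) + 1/2 := by
      push_cast; ring
    have heq : (k:ℝ) * ((k:ℝ) - 1) / (8 * n) + 1/2 * (((k:ℝ)/2) / n)
        = ((k:ℝ) + 1) * (((k:ℝ) + 1) - 1) / (8 * n) := by
      field_simp; ring
    have hlog : ((k:ℝ) - 1) / 2 * Real.log n + 1/2 * Real.log n
        = (((k:ℝ) + 1) - 1) / 2 * Real.log n := by ring
    push_cast
    push_cast at ih
    calc Real.log (Real.Gamma (n + ((k:ℝ) + 1) / 2))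
        = Real.log (Real.Gamma ((n + (k:ℝ)/2) + 1/2)) := by ring_nf
      _ ≤ Real.log (Real.Gamma (n + (k:ℝ)/2)) + 1/2 * Real.log (n + (k:ℝ)/2) := hA
      _ ≤ _ := by nlinarith [hB, ih]

/-- **Gamma ratio logarithmic bound.**  For `k ≥ 1` and `n ≥ max(4,k)`,
`log(Γ(1/2)Γ(n+k/2)/(Γ(k/2)Γ(n+1/2))) ≤ ((k−1)/2)log n + k(k−1)/(4n) + 1/(12n) + log(Γ(1/2)/Γ(k/2))`. -/
theorem gamma_ratio_log_bound (k n : ℕ) (hk : 1 ≤ k) (hn : max 4 k ≤ n) :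
    Real.log (Real.Gamma (1 / 2) * Real.Gamma ((n : ℝ) + (k : ℝ) / 2) /
        (Real.Gamma ((k : ℝ) / 2) * Real.Gamma ((n : ℝ) + 1 / 2))) ≤
      ((k : ℝ) - 1) / 2 * Real.log n + (k : ℝ) * ((k : ℝ) - 1) / (4 * n) + 1 / (12 * n) +
        Real.log (Real.Gamma (1 / 2) / Real.Gamma ((k : ℝ) / 2)) := by
  have hn4 : (4:ℕ) ≤ n := le_trans (le_max_left _ _) hn
  have hn1 : (1:ℝ) ≤ (n:ℝ) := by exact_mod_cast le_trans (by norm_num) hn4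
  have hn0 : (0:ℝ) < (n:ℝ) := by linarith
  have hk1 : (1:ℝ) ≤ (k:ℝ) := by exact_mod_cast hk
  have hg1 : 0 < Real.Gamma (1/2 : ℝ) := Real.Gamma_pos_of_pos (by norm_num)
  have hgk : 0 < Real.Gamma ((k:ℝ)/2) := Real.Gamma_pos_of_pos (by linarith)
  have hgn1 : 0 < Real.Gamma ((n:ℝ) + 1/2) := Real.Gamma_pos_of_pos (by linarith)
  have hgnk : 0 < Real.Gamma ((n:ℝ) + (k:ℝ)/2) := Real.Gamma_pos_of_pos (by positivity)
  rw [Real.log_div (by positivity) (by positivity), Real.log_mul hg1.ne' hgnk.ne',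
    Real.log_mul hgk.ne' hgn1.ne', Real.log_div hg1.ne' hgk.ne']
  have hmain := log_gamma_ratio_aux hn1 k hk
  have h8 : (k:ℝ) * ((k:ℝ) - 1) / (8 * n) ≤ (k:ℝ) * ((k:ℝ) - 1) / (4 * n) := by
    apply div_le_div_of_nonneg_left (by nlinarith) (by positivity) (by linarith)
  have h12 : (0:ℝ) ≤ 1 / (12 * n) := by positivity
  linarith

end SBM
end

section
/- Let k ≥ 2, let π ∈ (0,1]^k with Σ_a π_a = 1 and all π_a > 0, let S ∈ [0,1]^{k×k} be symmetric, and let (π*, S*) = M_{k−1,k}(π, S) be the parameters obtained by merging blocks k−1 and k. Let τ(t) = t log t − t (with 0 log 0 = 0). Then Σ_{a,b=1}^{k−1} π*_a π*_b τ(S*_{a,b}) ≤ Σ_{a,b=1}^{k} π_a π_b τ(S_{a,b}), and equality holds if and only if S_{a,k} = S_{a,k−1} for all a = 1, …, k, i.e. if and only if the last two columns of S are identical. -/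
open MeasureTheory Filter
open scoped Classical

namespace SBM

lemma tau_jensen2 {α β x y : ℝ} (hα : 0 < α) (hβ : 0 < β) (hx : 0 ≤ x) (hy : 0 ≤ y) :
    (α + β) * tauFn ((α * x + β * y) / (α + β)) ≤ α * tauFn x + β * tauFn y ∧
      ((α + β) * tauFn ((α * x + β * y) / (α + β)) = α * tauFn x + β * tauFn y ↔ x = y) := by
  have hσ : 0 < α + β := by linarith
  set m := (α * x + β * y) / (α + β) with hm
  have hmval : α * x + β * y = (α + β) * m := by rw [hm]; field_simp
  have hmem : m = (α / (α + β)) • x + (β / (α + β)) • y := by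
    rw [hm]; simp only [smul_eq_mul]; field_simp
  have hab : α / (α + β) + β / (α + β) = 1 := by field_simp
  have key : (α + β) * tauFn m = (α + β) * (m * Real.log m) - (α * x + β * y) := by
    simp only [tauFn]; rw [mul_sub, ← hmval]
  have rkey : α * tauFn x + β * tauFn y
      = α * (x * Real.log x) + β * (y * Real.log y) - (α * x + β * y) := by
    simp only [tauFn]; ring
  have h1 : (α + β) * (m * Real.log m) ≤ α * (x * Real.log x) + β * (y * Real.log y) := by
    have h := Real.convexOn_mul_log.2 (Set.mem_Ici.2 hx) (Set.mem_Ici.2 hy)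
      (div_pos hα hσ).le (div_pos hβ hσ).le hab
    rw [← hmem] at h
    simp only [smul_eq_mul] at h
    have h2 := mul_le_mul_of_nonneg_left h hσ.le
    have h3 : (α + β) * (α / (α + β) * (x * Real.log x) + β / (α + β) * (y * Real.log y))
        = α * (x * Real.log x) + β * (y * Real.log y) := by field_simp
    linarith
  constructor
  · rw [key, rkey]; linarith
  constructor
  · intro hEq
    by_contra hxy
    have h := Real.strictConvexOn_mul_log.2 (Set.mem_Ici.2 hx) (Set.mem_Ici.2 hy) hxy
      (div_pos hα hσ) (div_pos hβ hσ) hab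
    rw [← hmem] at h
    simp only [smul_eq_mul] at h
    have h2 := mul_lt_mul_of_pos_left h hσ
    have h3 : (α + β) * (α / (α + β) * (x * Real.log x) + β / (α + β) * (y * Real.log y))
        = α * (x * Real.log x) + β * (y * Real.log y) := by field_simp
    rw [key, rkey] at hEq
    linarith
  · rintro rfl
    have : m = x := by rw [hm, div_eq_iff hσ.ne']; ring
    rw [this]; ring

lemma tau_jensen3 {α β X Y Z : ℝ} (hα : 0 < α) (hβ : 0 < β)
    (hX : 0 ≤ X) (hY : 0 ≤ Y) (hZ : 0 ≤ Z) :
    (α + β) * (α + β) * tauFn ((α ^ 2 * X + 2 * α * β * Y + β ^ 2 * Z) / (α + β) ^ 2)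
        ≤ α * α * tauFn X + 2 * (α * β) * tauFn Y + β * β * tauFn Z ∧
      ((α + β) * (α + β) * tauFn ((α ^ 2 * X + 2 * α * β * Y + β ^ 2 * Z) / (α + β) ^ 2)
          = α * α * tauFn X + 2 * (α * β) * tauFn Y + β * β * tauFn Z ↔ X = Y ∧ Y = Z) := by
  have hσ : 0 < α + β := by linarith
  have hp : (0:ℝ) ≤ (α * X + β * Y) / (α + β) := by positivity
  have hq : (0:ℝ) ≤ (α * Y + β * Z) / (α + β) := by positivity
  obtain ⟨j1, e1⟩ := tau_jensen2 hα hβ hp hq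
  obtain ⟨j2, e2⟩ := tau_jensen2 hα hβ hX hY
  obtain ⟨j3, e3⟩ := tau_jensen2 hα hβ hY hZ
  have hmean : (α ^ 2 * X + 2 * α * β * Y + β ^ 2 * Z) / (α + β) ^ 2
      = (α * ((α * X + β * Y) / (α + β)) + β * ((α * Y + β * Z) / (α + β))) / (α + β) := by
    field_simp; ring
  have A1 : (α + β) * (α + β) * tauFn ((α ^ 2 * X + 2 * α * β * Y + β ^ 2 * Z) / (α + β) ^ 2)
      ≤ (α + β) * (α * tauFn ((α * X + β * Y) / (α + β)) + β * tauFn ((α * Y + β * Z) / (α + β))) := by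
    rw [hmean]
    nlinarith [mul_le_mul_of_nonneg_left j1 hσ.le]
  have B2 := mul_le_mul_of_nonneg_left j2 hα.le
  have B3 := mul_le_mul_of_nonneg_left j3 hβ.le
  have A2 : (α + β) * (α * tauFn ((α * X + β * Y) / (α + β)) + β * tauFn ((α * Y + β * Z) / (α + β)))
      ≤ α * α * tauFn X + 2 * (α * β) * tauFn Y + β * β * tauFn Z := by nlinarith
  constructor
  · linarith
  constructor
  · intro hE
    have hB : (α + β) * (α * tauFn ((α * X + β * Y) / (α + β)) + β * tauFn ((α * Y + β * Z) / (α + β)))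
        = α * α * tauFn X + 2 * (α * β) * tauFn Y + β * β * tauFn Z := le_antisymm A2 (by linarith)
    have hpe : (α + β) * tauFn ((α * X + β * Y) / (α + β)) = α * tauFn X + β * tauFn Y := by
      refine le_antisymm j2 ?_
      nlinarith
    have hqe : (α + β) * tauFn ((α * Y + β * Z) / (α + β)) = α * tauFn Y + β * tauFn Z := by
      refine le_antisymm j3 ?_
      nlinarith
    exact ⟨e2.mp hpe, e3.mp hqe⟩
  · rintro ⟨rfl, rfl⟩
    have hc : (α ^ 2 * X + 2 * α * β * X + β ^ 2 * X) / (α + β) ^ 2 = X := by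
      rw [div_eq_iff (by positivity)]; ring
    rw [hc]; ring

lemma sum_split (n : ℕ) (F : Fin (n + 1) → Fin (n + 1) → ℝ) :
    (∑ a, ∑ b, F a b) =
      (∑ c : Fin n, ∑ d : Fin n, F c.castSucc d.castSucc) +
        (∑ c : Fin n, F c.castSucc (Fin.last n)) +
        ((∑ d : Fin n, F (Fin.last n) d.castSucc) + F (Fin.last n) (Fin.last n)) := by
  rw [Fin.sum_univ_castSucc (f := fun a => ∑ b, F a b)]
  simp only [Fin.sum_univ_castSucc, Finset.sum_add_distrib]


/-- **Merging decreases the `τ`-functional**, with equality iff the last two columns of the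
connectivity matrix coincide.  Here `(πs, Ms) = M_{k−1,k}(π, M)`. -/
theorem merge_tau_le
    (k : ℕ) (hk : 2 ≤ k)
    (π : Fin k → ℝ) (hπpos : ∀ a, 0 < π a) (hπle : ∀ a, π a ≤ 1) (hπsum : (∑ a, π a) = 1)
    (M : Fin k → Fin k → ℝ) (hM : ∀ a b, 0 ≤ M a b ∧ M a b ≤ 1)
    (hMsym : ∀ a b, M a b = M b a)
    (r s : Fin k) (hr : (r : ℕ) = k - 2) (hs : (s : ℕ) = k - 1)
    (πs : Fin (k - 1) → ℝ) (Ms : Fin (k - 1) → Fin (k - 1) → ℝ)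
    -- the merged proportions of `M_{k−1,k}`
    (hπs : ∀ c : Fin (k - 1), πs c = if (c : ℕ) < k - 2 then π (up c) else π r + π s)
    -- the merged connectivity matrix of `M_{k−1,k}`
    (hMs : ∀ c d : Fin (k - 1), Ms c d =
      if (c : ℕ) < k - 2 then
        (if (d : ℕ) < k - 2 then M (up c) (up d)
         else (π r * M (up c) r + π s * M (up c) s) / (π r + π s))
      else
        (if (d : ℕ) < k - 2 then (π r * M r (up d) + π s * M s (up d)) / (π r + π s)
         else (π r ^ 2 * M r r + 2 * π r * π s * M r s + π s ^ 2 * M s s) /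
           (π r + π s) ^ 2))
    :
    (∑ c, ∑ d, πs c * πs d * tauFn (Ms c d)) ≤ (∑ a, ∑ b, π a * π b * tauFn (M a b)) ∧
    ((∑ c, ∑ d, πs c * πs d * tauFn (Ms c d)) = (∑ a, ∑ b, π a * π b * tauFn (M a b)) ↔
      ∀ a, M a s = M a r) := by
  obtain ⟨m, rfl⟩ : ∃ m, k = m + 2 := ⟨k - 2, by omega⟩
  clear hk hπle hπsum
  have hrv : (r : ℕ) = m := by omega
  have hsv : (s : ℕ) = m + 1 := by omega
  have hsl : s = Fin.last (m + 1) := by apply Fin.ext; simpa using hsv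
  have hlr : ((Fin.last m).castSucc : Fin (m + 2)) = r := by
    apply Fin.ext; simp [hrv]
  have hσ : 0 < π r + π s := add_pos (hπpos r) (hπpos s)
  -- value lemmas
  have hπs1 : ∀ c : Fin (m + 1), (c : ℕ) < m → πs c = π c.castSucc := by
    intro c hc
    rw [hπs c, if_pos (show (c : ℕ) < m + 2 - 2 by omega)]
    rfl
  have hπs2 : πs (Fin.last m) = π r + π s := by
    rw [hπs (Fin.last m), if_neg (by simp)]
  have hMs1 : ∀ c d : Fin (m + 1), (c : ℕ) < m → (d : ℕ) < m →
      Ms c d = M c.castSucc d.castSucc := by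
    intro c d hc hd
    rw [hMs c d, if_pos (show (c : ℕ) < m + 2 - 2 by omega),
      if_pos (show (d : ℕ) < m + 2 - 2 by omega)]
    rfl
  have hMs2 : ∀ c : Fin (m + 1), (c : ℕ) < m →
      Ms c (Fin.last m) = (π r * M c.castSucc r + π s * M c.castSucc s) / (π r + π s) := by
    intro c hc
    rw [hMs c (Fin.last m), if_pos (show (c : ℕ) < m + 2 - 2 by omega),
      if_neg (by simp)]
    rfl
  have hMs3 : ∀ d : Fin (m + 1), (d : ℕ) < m →
      Ms (Fin.last m) d = (π r * M r d.castSucc + π s * M s d.castSucc) / (π r + π s) := by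
    intro d hd
    rw [hMs (Fin.last m) d, if_neg (by simp),
      if_pos (show (d : ℕ) < m + 2 - 2 by omega)]
    rfl
  have hMs4 : Ms (Fin.last m) (Fin.last m)
      = (π r ^ 2 * M r r + 2 * π r * π s * M r s + π s ^ 2 * M s s) / (π r + π s) ^ 2 := by
    rw [hMs (Fin.last m) (Fin.last m), if_neg (by simp), if_neg (by simp)]
  -- pointwise comparisons
  have cross : ∀ a : Fin (m + 2),
      π a * (π r + π s) * tauFn ((π r * M a r + π s * M a s) / (π r + π s))
        ≤ π a * π r * tauFn (M a r) + π a * π s * tauFn (M a s) ∧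
      (π a * (π r + π s) * tauFn ((π r * M a r + π s * M a s) / (π r + π s))
          = π a * π r * tauFn (M a r) + π a * π s * tauFn (M a s) ↔ M a r = M a s) := by
    intro a
    obtain ⟨h, e⟩ := tau_jensen2 (hπpos r) (hπpos s) (hM a r).1 (hM a s).1
    constructor
    · have := mul_le_mul_of_nonneg_left h (hπpos a).le
      linarith
    constructor
    · intro hE
      apply e.mp
      apply mul_left_cancel₀ (hπpos a).ne'
      linarith
    · intro hE
      have := e.mpr hE
      linarith [congrArg (fun t => π a * t) this]
  have cross2 : ∀ a : Fin (m + 2),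
      (π r + π s) * π a * tauFn ((π r * M r a + π s * M s a) / (π r + π s))
        ≤ π r * π a * tauFn (M r a) + π s * π a * tauFn (M s a) ∧
      ((π r + π s) * π a * tauFn ((π r * M r a + π s * M s a) / (π r + π s))
          = π r * π a * tauFn (M r a) + π s * π a * tauFn (M s a) ↔ M r a = M s a) := by
    intro a
    obtain ⟨h, e⟩ := tau_jensen2 (hπpos r) (hπpos s) (hM r a).1 (hM s a).1
    constructor
    · have := mul_le_mul_of_nonneg_left h (hπpos a).le
      linarith
    constructor
    · intro hE
      apply e.mp
      apply mul_left_cancel₀ (hπpos a).ne'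
      linarith
    · intro hE
      have := e.mpr hE
      linarith [congrArg (fun t => π a * t) this]
  obtain ⟨diagLe, diagIff⟩ := tau_jensen3 (hπpos r) (hπpos s) (hM r r).1 (hM r s).1 (hM s s).1
  -- evaluate both double sums
  have hLHS : (∑ c : Fin (m + 1), ∑ d : Fin (m + 1), πs c * πs d * tauFn (Ms c d)) =
      (∑ c : Fin m, ∑ d : Fin m,
          π c.castSucc.castSucc * π d.castSucc.castSucc
            * tauFn (M c.castSucc.castSucc d.castSucc.castSucc)) +
        (∑ c : Fin m, π c.castSucc.castSucc * (π r + π s)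
            * tauFn ((π r * M c.castSucc.castSucc r + π s * M c.castSucc.castSucc s)
              / (π r + π s))) +
        ((∑ d : Fin m, (π r + π s) * π d.castSucc.castSucc
            * tauFn ((π r * M r d.castSucc.castSucc + π s * M s d.castSucc.castSucc)
              / (π r + π s))) +
          (π r + π s) * (π r + π s)
            * tauFn ((π r ^ 2 * M r r + 2 * π r * π s * M r s + π s ^ 2 * M s s)
              / (π r + π s) ^ 2)) := by
    rw [sum_split m (fun c d => πs c * πs d * tauFn (Ms c d))]
    congr 1
    · congr 1
      · refine Finset.sum_congr rfl fun c _ => Finset.sum_congr rfl fun d _ => ?_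
        rw [hπs1 _ (by simpa using c.2), hπs1 _ (by simpa using d.2),
          hMs1 _ _ (by simpa using c.2) (by simpa using d.2)]
      · refine Finset.sum_congr rfl fun c _ => ?_
        rw [hπs1 _ (by simpa using c.2), hπs2, hMs2 _ (by simpa using c.2)]
    · congr 1
      · refine Finset.sum_congr rfl fun d _ => ?_
        rw [hπs2, hπs1 d.castSucc (by simpa using d.2), hMs3 d.castSucc (by simpa using d.2)]
      · rw [hπs2, hMs4]
  have hRHS : (∑ a : Fin (m + 2), ∑ b : Fin (m + 2), π a * π b * tauFn (M a b)) =
      (∑ c : Fin m, ∑ d : Fin m,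
          π c.castSucc.castSucc * π d.castSucc.castSucc
            * tauFn (M c.castSucc.castSucc d.castSucc.castSucc)) +
        (∑ c : Fin m, (π c.castSucc.castSucc * π r * tauFn (M c.castSucc.castSucc r)
            + π c.castSucc.castSucc * π s * tauFn (M c.castSucc.castSucc s))) +
        ((∑ d : Fin m, (π r * π d.castSucc.castSucc * tauFn (M r d.castSucc.castSucc)
            + π s * π d.castSucc.castSucc * tauFn (M s d.castSucc.castSucc))) +
          (π r * π r * tauFn (M r r) + π r * π s * tauFn (M r s)
            + π s * π r * tauFn (M s r) + π s * π s * tauFn (M s s))) := by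
    rw [sum_split (m + 1) (fun a b => π a * π b * tauFn (M a b)), ← hsl,
      sum_split m (fun c d => π c.castSucc * π d.castSucc * tauFn (M c.castSucc d.castSucc)),
      hlr, Fin.sum_univ_castSucc (f := fun c : Fin (m + 1) => π c.castSucc * π s * tauFn (M c.castSucc s)),
      Fin.sum_univ_castSucc (f := fun d : Fin (m + 1) => π s * π d.castSucc * tauFn (M s d.castSucc)),
      hlr, Finset.sum_add_distrib, Finset.sum_add_distrib]
    ring
  show (∑ c : Fin (m + 1), ∑ d : Fin (m + 1), πs c * πs d * tauFn (Ms c d))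
        ≤ (∑ a, ∑ b, π a * π b * tauFn (M a b)) ∧
      ((∑ c : Fin (m + 1), ∑ d : Fin (m + 1), πs c * πs d * tauFn (Ms c d))
        = (∑ a, ∑ b, π a * π b * tauFn (M a b)) ↔ ∀ a, M a s = M a r)
  rw [hLHS, hRHS]
  -- group comparisons
  have T2le : (∑ c : Fin m, π c.castSucc.castSucc * (π r + π s)
      * tauFn ((π r * M c.castSucc.castSucc r + π s * M c.castSucc.castSucc s) / (π r + π s)))
      ≤ ∑ c : Fin m, (π c.castSucc.castSucc * π r * tauFn (M c.castSucc.castSucc r)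
          + π c.castSucc.castSucc * π s * tauFn (M c.castSucc.castSucc s)) :=
    Finset.sum_le_sum fun c _ => (cross _).1
  have T2iff := Finset.sum_eq_sum_iff_of_le (fun (c : Fin m) (_ : c ∈ Finset.univ) => (cross c.castSucc.castSucc).1)
  have T3le : (∑ d : Fin m, (π r + π s) * π d.castSucc.castSucc
      * tauFn ((π r * M r d.castSucc.castSucc + π s * M s d.castSucc.castSucc) / (π r + π s)))
      ≤ ∑ d : Fin m, (π r * π d.castSucc.castSucc * tauFn (M r d.castSucc.castSucc)
          + π s * π d.castSucc.castSucc * tauFn (M s d.castSucc.castSucc)) :=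
    Finset.sum_le_sum fun d _ => (cross2 _).1
  have T3iff := Finset.sum_eq_sum_iff_of_le (fun (d : Fin m) (_ : d ∈ Finset.univ) => (cross2 d.castSucc.castSucc).1)
  have T4le : (π r + π s) * (π r + π s)
      * tauFn ((π r ^ 2 * M r r + 2 * π r * π s * M r s + π s ^ 2 * M s s) / (π r + π s) ^ 2)
      ≤ π r * π r * tauFn (M r r) + π r * π s * tauFn (M r s)
        + π s * π r * tauFn (M s r) + π s * π s * tauFn (M s s) := by
    rw [hMsym s r]; linarith
  constructor
  · linarith
  constructor
  · intro hE
    have E2 : (∑ c : Fin m, π c.castSucc.castSucc * (π r + π s)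
        * tauFn ((π r * M c.castSucc.castSucc r + π s * M c.castSucc.castSucc s) / (π r + π s)))
        = ∑ c : Fin m, (π c.castSucc.castSucc * π r * tauFn (M c.castSucc.castSucc r)
            + π c.castSucc.castSucc * π s * tauFn (M c.castSucc.castSucc s)) :=
      le_antisymm T2le (by linarith)
    have E3 : (∑ d : Fin m, (π r + π s) * π d.castSucc.castSucc
        * tauFn ((π r * M r d.castSucc.castSucc + π s * M s d.castSucc.castSucc) / (π r + π s)))
        = ∑ d : Fin m, (π r * π d.castSucc.castSucc * tauFn (M r d.castSucc.castSucc)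
            + π s * π d.castSucc.castSucc * tauFn (M s d.castSucc.castSucc)) :=
      le_antisymm T3le (by linarith)
    have E4 : (π r + π s) * (π r + π s)
        * tauFn ((π r ^ 2 * M r r + 2 * π r * π s * M r s + π s ^ 2 * M s s) / (π r + π s) ^ 2)
        = π r * π r * tauFn (M r r) + π r * π s * tauFn (M r s)
          + π s * π r * tauFn (M s r) + π s * π s * tauFn (M s s) :=
      le_antisymm T4le (by linarith)
    have hD : M r r = M r s ∧ M r s = M s s := by
      apply diagIff.mp
      rw [hMsym s r] at E4; linarith
    intro a
    by_cases ha : (a : ℕ) < m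
    · have haa : a = (⟨(a : ℕ), ha⟩ : Fin m).castSucc.castSucc := by
        apply Fin.ext; rfl
      rw [haa]
      exact ((cross _).2.mp (T2iff.mp E2 ⟨(a : ℕ), ha⟩ (Finset.mem_univ _))).symm
    · by_cases ha' : (a : ℕ) = m
      · have haa : a = r := by apply Fin.ext; omega
        rw [haa]
        exact hD.1.symm
      · have haa : a = s := by apply Fin.ext; have := a.2; omega
        rw [haa, hMsym s r, ← hD.2]
  · intro hcol
    have E2 : (∑ c : Fin m, π c.castSucc.castSucc * (π r + π s)
        * tauFn ((π r * M c.castSucc.castSucc r + π s * M c.castSucc.castSucc s) / (π r + π s)))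
        = ∑ c : Fin m, (π c.castSucc.castSucc * π r * tauFn (M c.castSucc.castSucc r)
            + π c.castSucc.castSucc * π s * tauFn (M c.castSucc.castSucc s)) :=
      T2iff.mpr fun c _ => (cross _).2.mpr (hcol _).symm
    have E3 : (∑ d : Fin m, (π r + π s) * π d.castSucc.castSucc
        * tauFn ((π r * M r d.castSucc.castSucc + π s * M s d.castSucc.castSucc) / (π r + π s)))
        = ∑ d : Fin m, (π r * π d.castSucc.castSucc * tauFn (M r d.castSucc.castSucc)
            + π s * π d.castSucc.castSucc * tauFn (M s d.castSucc.castSucc)) :=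
      T3iff.mpr fun d _ => (cross2 _).2.mpr
        (by rw [hMsym r _, hMsym s _, hcol d.castSucc.castSucc])
    have E4 : (π r + π s) * (π r + π s)
        * tauFn ((π r ^ 2 * M r r + 2 * π r * π s * M r s + π s ^ 2 * M s s) / (π r + π s) ^ 2)
        = π r * π r * tauFn (M r r) + π r * π s * tauFn (M r s)
          + π s * π r * tauFn (M s r) + π s * π s * tauFn (M s s) := by
      rw [hMsym s r]
      have := diagIff.mpr ⟨(hcol r).symm, by rw [hMsym r s, ← hcol s]⟩
      linarith
    linarith


end SBM
end
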